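/- arXiv:quant-ph/0307148 — 3 statements merged into one kernel-verified Lean document; each statement's English description precedes it below -/
import Mathlib

section
/- The weight (number of non-identity factors) of the Pauli product appearing in a nonzero commutator of two Pauli products P(a) and P(b) satisfies: it is contained in the union of their supports, contains the symmetric difference of their supports, and intersects the intersection of their supports in an odd number of positions. -/
open Matrix Complex

noncomputable def pauli : Fin 4 → Matrix (Fin 2) (Fin 2) ℂ
  | 0 => 1
  | 1 => !![0, 1; 1, 0]
  | 2 => !![0, -I; I, 0]
  | 3 => !![1, 0; 0, -1]

/-- Tensor product of Pauli matrices indexed by `a : Fin n → Fin 4`. -/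
noncomputable def PauliProd {n : ℕ} (a : Fin n → Fin 4) :
    Matrix (Fin n → Fin 2) (Fin n → Fin 2) ℂ :=
  Matrix.of fun i j => ∏ k, pauli (a k) (i k) (j k)

/-- Weight: the number of non-identity tensor factors. -/
noncomputable def wt {n : ℕ} (a : Fin n → Fin 4) : ℕ :=
  (Finset.univ.filter fun i => a i ≠ 0).card

/-- Support: the set of qubits on which the Pauli product acts nontrivially. -/
noncomputable def supp {n : ℕ} (a : Fin n → Fin 4) : Finset (Fin n) :=
  Finset.univ.filter fun i => a i ≠ 0

/-!
Encoding `I, X, Y, Z` as `0, 1, 2, 3`, i.e. as the bit pairs `00, 01, 10, 11`, a product of two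
Pauli matrices is, up to a nonzero phase, the Pauli matrix whose index is the bitwise xor of the
two indices; the phase is symmetric except at anticommuting pairs, where it changes sign.
Both facts pass to tensor products factorwise. Hence `P(a) P(b) = λ' P(a ⊕ b)` with `λ' ≠ 0`,
and `P(b) P(a) = (-1)^m P(a) P(b)` with `m` the number of anticommuting positions. Since distinct
Pauli products are orthogonal for the entrywise pairing `∑ M_xy N_xy`, no Pauli product is a
multiple of another, so `c = a ⊕ b`: its support is the set where `a` and `b` differ, and
`supp c ∩ supp a ∩ supp b` is the set of anticommuting positions. A nonzero commutator forces
`(-1)^m ≠ 1`, i.e. `m` odd.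
-/

namespace Matrix

variable {ι l m n R : Type*} [Fintype ι] [CommSemiring R]

def piKronecker (A : ι → Matrix m n R) : Matrix (ι → m) (ι → n) R :=
  of fun i j => ∏ k, A k (i k) (j k)

theorem piKronecker_mul [DecidableEq ι] [Fintype m] (A : ι → Matrix l m R)
    (B : ι → Matrix m n R) :
    piKronecker A * piKronecker B = piKronecker fun k => A k * B k := by
  ext i j
  simp only [piKronecker, mul_apply, of_apply, ← Finset.prod_mul_distrib]
  exact (Fintype.prod_sum fun k x => A k (i k) x * B k x (j k)).symm

theorem piKronecker_smul (c : ι → R) (A : ι → Matrix m n R) :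
    (piKronecker fun k => c k • A k) = (∏ k, c k) • piKronecker A := by
  ext i j
  simp [piKronecker, Finset.prod_mul_distrib]

theorem piKronecker_hadamard (A B : ι → Matrix m n R) :
    piKronecker A ⊙ piKronecker B = piKronecker fun k => A k ⊙ B k := by
  ext i j
  simp [piKronecker, Finset.prod_mul_distrib]

theorem sum_piKronecker_apply [DecidableEq ι] [Fintype m] [Fintype n] (A : ι → Matrix m n R) :
    ∑ i, ∑ j, piKronecker A i j = ∏ k, ∑ x, ∑ y, A k x y := by
  simp only [piKronecker, of_apply, ← Fintype.prod_sum]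
  exact (Fintype.prod_sum fun k x => ∑ y, A k x y).symm

end Matrix

theorem mem_supp {n : ℕ} {a : Fin n → Fin 4} {k : Fin n} : k ∈ supp a ↔ a k ≠ 0 := by
  simp [supp]

theorem PauliProd_eq_piKronecker {n : ℕ} (a : Fin n → Fin 4) :
    PauliProd a = piKronecker fun k => pauli (a k) :=
  rfl

instance : LawfulXor (Fin 4) where
  xor_assoc := by decide
  xor_self := by decide
  xor_zero := by decide
  xor_comm := by decide

def pauliPhase : Fin 4 → Fin 4 → ℂ
  | 1, 2 => I
  | 2, 1 => -I
  | 2, 3 => I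
  | 3, 2 => -I
  | 3, 1 => I
  | 1, 3 => -I
  | _, _ => 1

theorem pauliPhase_ne_zero (i j : Fin 4) : pauliPhase i j ≠ 0 := by
  fin_cases i <;> fin_cases j <;> simp [pauliPhase]

theorem pauli_mul (i j : Fin 4) : pauli i * pauli j = pauliPhase i j • pauli (i ^^^ j) := by
  fin_cases i <;> fin_cases j <;> ext x y <;> fin_cases x <;> fin_cases y <;>
    simp [pauli, pauliPhase, mul_apply, Fin.sum_univ_two, one_apply]

def PauliAnticommute (i j : Fin 4) : Prop :=
  i ≠ 0 ∧ j ≠ 0 ∧ i ≠ j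

instance : DecidableRel PauliAnticommute := fun i j => by
  unfold PauliAnticommute; infer_instance

theorem pauli_mul_swap (i j : Fin 4) :
    pauli j * pauli i = (if PauliAnticommute i j then -1 else 1 : ℂ) • (pauli i * pauli j) := by
  fin_cases i <;> fin_cases j <;> ext x y <;> fin_cases x <;> fin_cases y <;>
    simp [PauliAnticommute, pauli, mul_apply, Fin.sum_univ_two, one_apply]

theorem sum_hadamard_pauli_ne_zero_iff (i j : Fin 4) :
    ∑ x, ∑ y, (pauli i ⊙ pauli j) x y ≠ 0 ↔ i = j := by
  fin_cases i <;> fin_cases j <;> simp [pauli, Fin.sum_univ_two, one_apply]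

theorem PauliProd_mul {n : ℕ} (a b : Fin n → Fin 4) :
    PauliProd a * PauliProd b =
      (∏ k, pauliPhase (a k) (b k)) • PauliProd fun k => a k ^^^ b k := by
  simp only [PauliProd_eq_piKronecker, piKronecker_mul, pauli_mul, piKronecker_smul]

theorem PauliProd_mul_swap {n : ℕ} (a b : Fin n → Fin 4) :
    PauliProd b * PauliProd a =
      (-1 : ℂ) ^ (Finset.univ.filter fun k => PauliAnticommute (a k) (b k)).card •
        (PauliProd a * PauliProd b) := by
  have swap : (fun k => pauli (b k) * pauli (a k)) =
      fun k => (if PauliAnticommute (a k) (b k) then -1 else 1 : ℂ) • (pauli (a k) * pauli (b k)) :=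
    funext fun k => pauli_mul_swap (a k) (b k)
  simp only [PauliProd_eq_piKronecker, piKronecker_mul, swap, piKronecker_smul, Finset.prod_ite,
    Finset.prod_const, one_pow, mul_one]

theorem sum_hadamard_PauliProd {n : ℕ} (a b : Fin n → Fin 4) :
    ∑ x, ∑ y, (PauliProd a ⊙ PauliProd b) x y = ∏ k, ∑ x, ∑ y, (pauli (a k) ⊙ pauli (b k)) x y := by
  rw [PauliProd_eq_piKronecker, PauliProd_eq_piKronecker, piKronecker_hadamard,
    sum_piKronecker_apply]

theorem eq_of_PauliProd_eq_smul {n : ℕ} {c d : Fin n → Fin 4} {μ : ℂ}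
    (h : PauliProd d = μ • PauliProd c) : d = c := by
  have hdd : ∑ x, ∑ y, (PauliProd d ⊙ PauliProd d) x y ≠ 0 := by
    rw [sum_hadamard_PauliProd]
    exact Finset.prod_ne_zero_iff.2 fun k _ => (sum_hadamard_pauli_ne_zero_iff _ _).2 rfl
  have hdc : ∏ k, ∑ x, ∑ y, (pauli (d k) ⊙ pauli (c k)) x y ≠ 0 := by
    rw [← sum_hadamard_PauliProd]
    nth_rw 2 [h] at hdd
    simp only [hadamard_smul, Matrix.smul_apply, smul_eq_mul, ← Finset.mul_sum] at hdd
    exact right_ne_zero_of_mul hdd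
  funext k
  exact (sum_hadamard_pauli_ne_zero_iff _ _).1 (Finset.prod_ne_zero_iff.1 hdc k (Finset.mem_univ k))

/-- Support structure of a nonzero commutator of two Pauli products. -/
theorem pauli_commutator_support {n : ℕ} (a b c : Fin n → Fin 4) (lam : ℂ)
    (hcomm : PauliProd a * PauliProd b - PauliProd b * PauliProd a ≠ 0)
    (hprod : PauliProd a * PauliProd b = lam • PauliProd c) :
    supp c ⊆ supp a ∪ supp b ∧
      (supp a \ supp b) ∪ (supp b \ supp a) ⊆ supp c ∧
      Odd ((supp c ∩ supp a ∩ supp b).card) := by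
  have hc : c = fun k => a k ^^^ b k := by
    refine (eq_of_PauliProd_eq_smul (μ := (∏ k, pauliPhase (a k) (b k))⁻¹ * lam) ?_).symm
    rw [mul_smul, ← hprod, PauliProd_mul,
      inv_smul_smul₀ (Finset.prod_ne_zero_iff.2 fun k _ => pauliPhase_ne_zero _ _)]
  have mem_supp_c (k : Fin n) : k ∈ supp c ↔ a k ≠ b k := by
    rw [mem_supp, hc, Ne, xor_eq_zero_iff]
  have hodd : Odd (Finset.univ.filter fun k => PauliAnticommute (a k) (b k)).card := by
    rw [← Nat.not_even_iff_odd]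
    intro heven
    rw [PauliProd_mul_swap a b, heven.neg_one_pow, one_smul, sub_self] at hcomm
    exact hcomm rfl
  have hanti : supp c ∩ supp a ∩ supp b =
      Finset.univ.filter fun k => PauliAnticommute (a k) (b k) := by
    ext k
    rw [Finset.mem_filter_univ, Finset.mem_inter, Finset.mem_inter, mem_supp_c, mem_supp, mem_supp]
    unfold PauliAnticommute
    tauto
  refine ⟨fun k => ?_, fun k => ?_, hanti ▸ hodd⟩
  · simp only [mem_supp_c, Finset.mem_union, mem_supp]
    grind
  · simp only [mem_supp_c, Finset.mem_union, Finset.mem_sdiff, mem_supp]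
    grind
end

section
/- The conjugation f(A) = Y^{⊗n} Aᵀ Y^{⊗n} acts on a Pauli product P(a) by the sign (-1)^{wt(a)}, and consequently the Lie algebra g generated by odd-weight Paulis times i equals { A : f(A) = -A and A† = -A }. -/
/-!
Conjugating the transpose by `Y^{⊗n}` acts on a Pauli string `P(a)` by the sign `(-1)^{wt a}`,
since `Y σᵀ Y = -σ` for `σ = X, Y, Z` and `Y 1ᵀ Y = 1`. Pauli strings are orthogonal for the
trace form, so every `A` expands as `2^{-n} ∑ₐ tr(P(a) A) P(a)`. If `f(A) = -A`, the
coefficients of even weight vanish; if `A† = -A`, all coefficients are purely imaginary, so `A`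
is a real combination of the `i P(a)` with `wt a` odd.
-/

open Matrix Complex

namespace Matrix

variable {ι α β γ R : Type*} [Fintype ι] [CommSemiring R]

def piTensor (M : ι → Matrix α β R) : Matrix (ι → α) (ι → β) R :=
  of fun i j => ∏ k, M k (i k) (j k)

theorem piTensor_mul [DecidableEq ι] [Fintype β] (M : ι → Matrix α β R)
    (N : ι → Matrix β γ R) : piTensor M * piTensor N = piTensor fun k => M k * N k := by
  ext i j
  simp only [piTensor, mul_apply, of_apply, ← Finset.prod_mul_distrib, Finset.prod_univ_sum,
    Fintype.piFinset_univ]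

theorem piTensor_transpose (M : ι → Matrix α β R) :
    (piTensor M)ᵀ = piTensor fun k => (M k)ᵀ := rfl

theorem piTensor_conjTranspose [StarRing R] (M : ι → Matrix α β R) :
    (piTensor M)ᴴ = piTensor fun k => (M k)ᴴ := by
  ext i j
  simp only [piTensor, conjTranspose_apply, of_apply, star_prod]

theorem piTensor_smul (c : ι → R) (M : ι → Matrix α β R) :
    piTensor (fun k => c k • M k) = (∏ k, c k) • piTensor M := by
  ext i j
  simp [piTensor, Finset.prod_mul_distrib]

theorem sum_piTensor_apply_mul_piTensor_apply [DecidableEq ι] {σ : Type*} [Fintype σ]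
    (M N : σ → Matrix α β R) (i k : ι → α) (j l : ι → β) :
    ∑ a : ι → σ, piTensor (M ∘ a) i j * piTensor (N ∘ a) k l =
      ∏ m, ∑ s, M s (i m) (j m) * N s (k m) (l m) := by
  simp only [piTensor, of_apply, Function.comp_apply, ← Finset.prod_mul_distrib]
  exact (Fintype.prod_sum fun m s => M s (i m) (j m) * N s (k m) (l m)).symm

end Matrix

section Pauli

open Matrix

theorem pauli_conjTranspose (s : Fin 4) : (pauli s)ᴴ = pauli s := by
  fin_cases s <;> ext i j <;> fin_cases i <;> fin_cases j <;>
    simp [pauli, conjTranspose_apply, one_apply]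

theorem pauli_two_mul_pauli_mul_pauli_two (s : Fin 4) :
    pauli 2 * pauli s * pauli 2 = (if s = 0 then (1 : ℂ) else -1) • (pauli s)ᵀ := by
  fin_cases s <;> ext i j <;> fin_cases i <;> fin_cases j <;>
    simp [pauli, mul_apply, Fin.sum_univ_two, one_apply, vecHead, vecTail]

theorem pauli_two_mul_transpose_mul_pauli_two (s : Fin 4) :
    pauli 2 * (pauli s)ᵀ * pauli 2 = (if s = 0 then (1 : ℂ) else -1) • pauli s := by
  fin_cases s <;> ext i j <;> fin_cases i <;> fin_cases j <;>
    simp [pauli, mul_apply, Fin.sum_univ_two, one_apply, vecMul, dotProduct]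

theorem sum_pauli_apply_mul_pauli_apply (i j k l : Fin 2) :
    ∑ s, pauli s i j * pauli s k l = if i = l ∧ j = k then 2 else 0 := by
  fin_cases i <;> fin_cases j <;> fin_cases k <;> fin_cases l <;>
    simp [pauli, Fin.sum_univ_four, one_apply, Complex.ext_iff] <;> norm_num

variable {n : ℕ}

theorem pauliProd_eq_piTensor (a : Fin n → Fin 4) :
    PauliProd a = piTensor fun k => pauli (a k) := rfl

theorem prod_ite_eq_neg_one_pow_wt (a : Fin n → Fin 4) :
    ∏ k, (if a k = 0 then (1 : ℂ) else -1) = (-1) ^ wt a := by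
  simp [Finset.prod_ite, wt]

theorem pauliProd_conjTranspose (a : Fin n → Fin 4) : (PauliProd a)ᴴ = PauliProd a := by
  simp [pauliProd_eq_piTensor, piTensor_conjTranspose, pauli_conjTranspose]

theorem pauliProd_two_mul_piTensor_mul_pauliProd_two (M : Fin n → Matrix (Fin 2) (Fin 2) ℂ) :
    PauliProd (fun _ => 2) * piTensor M * PauliProd (fun _ => 2) =
      piTensor fun k => pauli 2 * M k * pauli 2 := by
  simp only [pauliProd_eq_piTensor, piTensor_mul]

theorem pauliProd_two_mul_pauliProd_mul_pauliProd_two (a : Fin n → Fin 4) :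
    PauliProd (fun _ => 2) * PauliProd a * PauliProd (fun _ => 2) =
      (-1 : ℂ) ^ wt a • (PauliProd a)ᵀ := by
  simp only [pauliProd_eq_piTensor a, pauliProd_two_mul_piTensor_mul_pauliProd_two,
    pauli_two_mul_pauli_mul_pauli_two, piTensor_smul, prod_ite_eq_neg_one_pow_wt,
    piTensor_transpose]

noncomputable def yConj (A : Matrix (Fin n → Fin 2) (Fin n → Fin 2) ℂ) :
    Matrix (Fin n → Fin 2) (Fin n → Fin 2) ℂ :=
  PauliProd (fun _ => 2) * Aᵀ * PauliProd (fun _ => 2)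

theorem yConj_pauliProd (a : Fin n → Fin 4) :
    yConj (PauliProd a) = (-1 : ℂ) ^ wt a • PauliProd a := by
  simp only [yConj, pauliProd_eq_piTensor a, piTensor_transpose,
    pauliProd_two_mul_piTensor_mul_pauliProd_two, pauli_two_mul_transpose_mul_pauli_two,
    piTensor_smul, prod_ite_eq_neg_one_pow_wt]

theorem yConj_add (A B : Matrix (Fin n → Fin 2) (Fin n → Fin 2) ℂ) :
    yConj (A + B) = yConj A + yConj B := by
  simp only [yConj, transpose_add, Matrix.mul_add, Matrix.add_mul]

theorem yConj_smul {R : Type*} [Monoid R] [DistribMulAction R ℂ] [IsScalarTower R ℂ ℂ]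
    [SMulCommClass R ℂ ℂ] (r : R) (A : Matrix (Fin n → Fin 2) (Fin n → Fin 2) ℂ) :
    yConj (r • A) = r • yConj A := by
  simp only [yConj, transpose_smul, Matrix.mul_smul, Matrix.smul_mul]

theorem trace_pauliProd_mul_yConj (a : Fin n → Fin 4)
    (A : Matrix (Fin n → Fin 2) (Fin n → Fin 2) ℂ) :
    trace (PauliProd a * yConj A) = (-1 : ℂ) ^ wt a * trace (PauliProd a * A) := by
  calc trace (PauliProd a * yConj A)
      = trace ((PauliProd (fun _ => 2) * PauliProd a * PauliProd (fun _ => 2)) * Aᵀ) := by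
        rw [yConj, ← Matrix.mul_assoc, ← Matrix.mul_assoc, trace_mul_comm]
        simp only [Matrix.mul_assoc]
    _ = (-1 : ℂ) ^ wt a * trace (PauliProd a * A) := by
        rw [pauliProd_two_mul_pauliProd_mul_pauliProd_two, smul_mul, trace_smul, smul_eq_mul,
          ← transpose_mul, trace_transpose, trace_mul_comm]

theorem sum_pauliProd_apply_mul_pauliProd_apply (i j k l : Fin n → Fin 2) :
    ∑ a : Fin n → Fin 4, PauliProd a i j * PauliProd a k l =
      if i = l ∧ j = k then 2 ^ n else 0 := by
  rw [show ∑ a : Fin n → Fin 4, PauliProd a i j * PauliProd a k l =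
      ∏ m, ∑ s, pauli s (i m) (j m) * pauli s (k m) (l m) from
    sum_piTensor_apply_mul_piTensor_apply pauli pauli i k j l]
  simp only [sum_pauli_apply_mul_pauli_apply, Finset.prod_ite_zero, Finset.mem_univ, true_implies,
    funext_iff, forall_and, Finset.prod_const, Finset.card_univ, Fintype.card_fin]

theorem pow_smul_eq_sum_trace_smul_pauliProd (A : Matrix (Fin n → Fin 2) (Fin n → Fin 2) ℂ) :
    (2 : ℂ) ^ n • A = ∑ a : Fin n → Fin 4, trace (PauliProd a * A) • PauliProd a := by
  ext i j
  calc (2 : ℂ) ^ n * A i j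
      = ∑ k, ∑ l, (∑ a : Fin n → Fin 4, PauliProd a k l * PauliProd a i j) * A l k := by
        simp [sum_pauliProd_apply_mul_pauliProd_apply, ite_and]
    _ = ∑ a : Fin n → Fin 4, (∑ k, ∑ l, PauliProd a k l * A l k) * PauliProd a i j := by
        simp only [Finset.sum_mul]
        conv_rhs => rw [Finset.sum_comm]
        refine Finset.sum_congr rfl fun k _ => ?_
        conv_rhs => rw [Finset.sum_comm]
        exact Finset.sum_congr rfl fun l _ => Finset.sum_congr rfl fun a _ => by ring
    _ = _ := by simp [trace, mul_apply, Matrix.sum_apply]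

end Pauli

theorem Complex.smul_eq_im_smul_I_smul {M : Type*} [AddCommGroup M] [Module ℂ M] [Module ℝ M]
    [IsScalarTower ℝ ℂ M] {z : ℂ} (hz : z.re = 0) (x : M) : z • x = z.im • (I • x) := by
  rw [← smul_assoc, Complex.real_smul]
  congr 1
  apply Complex.ext <;> simp [hz]

section OddSkew

open Matrix

variable {n : ℕ}

theorem trace_pauliProd_mul_eq_zero_of_even {A : Matrix (Fin n → Fin 2) (Fin n → Fin 2) ℂ}
    (hA : yConj A = -A) {a : Fin n → Fin 4} (ha : Even (wt a)) : trace (PauliProd a * A) = 0 := by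
  have h := trace_pauliProd_mul_yConj a A
  rw [hA, Matrix.mul_neg, trace_neg, ha.neg_one_pow, one_mul] at h
  exact self_eq_neg.mp h.symm

theorem re_trace_pauliProd_mul_eq_zero {A : Matrix (Fin n → Fin 2) (Fin n → Fin 2) ℂ}
    (hA : Aᴴ = -A) (a : Fin n → Fin 4) : (trace (PauliProd a * A)).re = 0 := by
  have h : star (trace (PauliProd a * A)) = -trace (PauliProd a * A) := by
    rw [← trace_conjTranspose, conjTranspose_mul, pauliProd_conjTranspose, hA, Matrix.neg_mul,
      trace_neg, trace_mul_comm]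
  have h_re := congrArg Complex.re h
  rw [Complex.star_def, Complex.conj_re, Complex.neg_re] at h_re
  linarith

def oddPauliSet (n : ℕ) : Set (Matrix (Fin n → Fin 2) (Fin n → Fin 2) ℂ) :=
  {M | ∃ a : Fin n → Fin 4, Odd (wt a) ∧ M = Complex.I • PauliProd a}

noncomputable def yConjNegSkewHermitian (n : ℕ) :
    Submodule ℝ (Matrix (Fin n → Fin 2) (Fin n → Fin 2) ℂ) where
  carrier := {A | yConj A = -A ∧ Aᴴ = -A}
  add_mem' := by
    rintro A B ⟨hA, hA'⟩ ⟨hB, hB'⟩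
    exact ⟨by rw [yConj_add, hA, hB, neg_add], by rw [conjTranspose_add, hA', hB', neg_add]⟩
  zero_mem' := by simp [yConj]
  smul_mem' := by
    rintro r A ⟨hA, hA'⟩
    exact ⟨by rw [yConj_smul, hA, smul_neg],
      by rw [conjTranspose_smul, hA', smul_neg, star_trivial]⟩

theorem span_oddPauliSet_le_yConjNegSkewHermitian :
    Submodule.span ℝ (oddPauliSet n) ≤ yConjNegSkewHermitian n := by
  rw [Submodule.span_le]
  rintro _ ⟨a, ha, rfl⟩
  refine ⟨?_, ?_⟩
  · rw [yConj_smul, yConj_pauliProd, ha.neg_one_pow, neg_one_smul, smul_neg]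
  · simp [conjTranspose_smul, pauliProd_conjTranspose]

theorem yConjNegSkewHermitian_le_span_oddPauliSet :
    yConjNegSkewHermitian n ≤ Submodule.span ℝ (oddPauliSet n) := by
  rintro A ⟨hY, hH⟩
  have hA :
      A = ((2 : ℝ) ^ n)⁻¹ • ∑ a : Fin n → Fin 4, trace (PauliProd a * A) • PauliProd a := by
    rw [← pow_smul_eq_sum_trace_smul_pauliProd, ← smul_assoc, Complex.real_smul]
    simp
  rw [hA]
  refine Submodule.smul_mem _ _ (Submodule.sum_mem _ fun a _ => ?_)
  by_cases ha : Odd (wt a)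
  · rw [Complex.smul_eq_im_smul_I_smul (re_trace_pauliProd_mul_eq_zero hH a)]
    exact Submodule.smul_mem _ _ (Submodule.subset_span ⟨a, ha, rfl⟩)
  · rw [trace_pauliProd_mul_eq_zero_of_even hY (Nat.not_odd_iff_even.mp ha), zero_smul]
    exact Submodule.zero_mem _

end OddSkew

/-- The Lie algebra generated by i times odd-weight Paulis equals the set of
matrices A with Y^{⊗n} Aᵀ Y^{⊗n} = -A and A† = -A. -/
theorem odd_pauli_span_eq {n : ℕ} :
    (↑(Submodule.span ℝ
      {M : Matrix (Fin n → Fin 2) (Fin n → Fin 2) ℂ |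
        ∃ a : Fin n → Fin 4, Odd (wt a) ∧ M = Complex.I • PauliProd a}) :
        Set (Matrix (Fin n → Fin 2) (Fin n → Fin 2) ℂ)) =
      {A : Matrix (Fin n → Fin 2) (Fin n → Fin 2) ℂ |
        PauliProd (fun _ => 2) * Aᵀ * PauliProd (fun _ => 2) = -A ∧ Aᴴ = -A} :=
  congrArg SetLike.coe <|
    le_antisymm span_oddPauliSet_le_yConjNegSkewHermitian yConjNegSkewHermitian_le_span_oddPauliSet
end

section
/- For any two distinct nonidentity Pauli products P(α), P(β), among Pauli products commuting with P(α), exactly half commute with P(β) and half anticommute with P(β) — provided P(β) is not equal to P(α) up to phase. -/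
open Matrix Complex

open scoped Classical

/-!
Encode I, X, Y, Z by the vectors (0,0), (1,0), (1,1), (0,1) of 𝔽₂². Each tensor factor where
two Pauli products anticommute contributes a sign -1, so P(a) and P(c) commute exactly when
their vectors are orthogonal for the symplectic pairing. The commutation conditions with P(α)
and P(β) are thus two 𝔽₂-linear functionals, the second nonzero and different from the first
because the pairing is nondegenerate. Hence some u lies in the kernel of the first functional
but not of the second, and translation by u swaps the two halves of that kernel.
-/

open Finset

section piKron

variable {ι l m o R : Type*} [Fintype ι] [CommSemiring R]

def Matrix.piKron (M : ι → Matrix l m R) : Matrix (ι → l) (ι → m) R :=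
  of fun i j => ∏ k, M k (i k) (j k)

theorem Matrix.piKron_mul [DecidableEq ι] [Fintype m] (M : ι → Matrix l m R)
    (N : ι → Matrix m o R) : piKron M * piKron N = piKron fun k => M k * N k := by
  ext i j
  simp only [piKron, mul_apply, of_apply, Fintype.prod_sum, prod_mul_distrib]

theorem Matrix.piKron_smul (c : ι → R) (M : ι → Matrix l m R) :
    piKron (fun k => c k • M k) = (∏ k, c k) • piKron M := by
  ext i j
  simp [piKron, prod_mul_distrib]

theorem Matrix.piKron_one [DecidableEq l] : piKron (fun _ : ι => (1 : Matrix l l R)) = 1 := by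
  ext i j
  simp [piKron, one_apply, prod_boole, funext_iff]

end piKron

noncomputable def signChar : AddChar (ZMod 2) ℂ := AddChar.zmodChar 2 (neg_one_sq (R := ℂ))

theorem signChar_one : signChar 1 = -1 := by
  rw [signChar, AddChar.zmodChar_apply, ZMod.val_one, pow_one]

theorem ZMod.eq_zero_or_eq_one (x : ZMod 2) : x = 0 ∨ x = 1 := by decide +revert

theorem signChar_eq_one_iff (x : ZMod 2) : signChar x = 1 ↔ x = 0 := by
  obtain rfl | rfl := ZMod.eq_zero_or_eq_one x <;> norm_num [signChar_one]

theorem signChar_sum {ι : Type*} (s : Finset ι) (f : ι → ZMod 2) :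
    signChar (∑ k ∈ s, f k) = ∏ k ∈ s, signChar (f k) :=
  map_prod signChar.toMonoidHom (fun k => Multiplicative.ofAdd (f k)) s

def symplecticForm (p q : ZMod 2 × ZMod 2) : ZMod 2 := p.1 * q.2 + p.2 * q.1

section SymplecticPairing

variable {ι : Type*} [Fintype ι]

def symplecticPairing (w : ι → ZMod 2 × ZMod 2) : (ι → ZMod 2 × ZMod 2) →+ ZMod 2 where
  toFun v := ∑ k, symplecticForm (w k) (v k)
  map_zero' := by simp [symplecticForm]
  map_add' v v' := by
    simp only [symplecticForm, Pi.add_apply, Prod.fst_add, Prod.snd_add, ← sum_add_distrib]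
    ring_nf

@[simp]
theorem symplecticPairing_zero : symplecticPairing (0 : ι → ZMod 2 × ZMod 2) = 0 := by
  ext v
  simp [symplecticPairing, symplecticForm]

theorem symplecticPairing_single [DecidableEq ι] (w : ι → ZMod 2 × ZMod 2) (k : ι)
    (q : ZMod 2 × ZMod 2) :
    symplecticPairing w (Pi.single k q) = symplecticForm (w k) q := by
  refine (Fintype.sum_eq_single k fun j hj => ?_).trans (by simp)
  simp [symplecticForm, hj]

theorem symplecticPairing_injective :
    Function.Injective (symplecticPairing : (ι → ZMod 2 × ZMod 2) → _) := by
  intro w w' h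
  funext k
  have h1 := DFunLike.congr_fun h (Pi.single k (1, 0))
  have h2 := DFunLike.congr_fun h (Pi.single k (0, 1))
  simp only [symplecticPairing_single, symplecticForm, mul_one, mul_zero, add_zero, zero_add]
    at h1 h2
  exact Prod.ext h2 h1

end SymplecticPairing

def pauliBits : Fin 4 → ZMod 2 × ZMod 2 := ![(0, 0), (1, 0), (1, 1), (0, 1)]

noncomputable def pauliBitsEquiv : Fin 4 ≃ ZMod 2 × ZMod 2 :=
  Equiv.ofBijective pauliBits (by decide)

noncomputable def pauliVec {ι : Type*} : (ι → Fin 4) ≃ (ι → ZMod 2 × ZMod 2) :=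
  Equiv.piCongrRight fun _ => pauliBitsEquiv

theorem pauliVec_zero {ι : Type*} : pauliVec (fun _ : ι => 0) = 0 := by
  ext <;> simp [pauliVec, pauliBitsEquiv, pauliBits]

theorem pauli_mul_comm (x y : Fin 4) :
    pauli y * pauli x =
      signChar (symplecticForm (pauliBitsEquiv x) (pauliBitsEquiv y)) • (pauli x * pauli y) := by
  fin_cases x <;> fin_cases y <;>
    simp [pauli, pauliBitsEquiv, pauliBits, symplecticForm, signChar_one, CharTwo.add_self_eq_zero]

theorem pauli_mul_self (x : Fin 4) : pauli x * pauli x = 1 := by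
  fin_cases x <;> simp [pauli, one_fin_two]

section PauliProd

variable {n : ℕ}

theorem pauliProd_eq_piKron (a : Fin n → Fin 4) : PauliProd a = piKron fun k => pauli (a k) :=
  rfl

theorem pauliProd_mul_self (a : Fin n → Fin 4) : PauliProd a * PauliProd a = 1 := by
  simp only [pauliProd_eq_piKron, piKron_mul, pauli_mul_self, piKron_one]

theorem pauliProd_mul_comm (a c : Fin n → Fin 4) :
    PauliProd c * PauliProd a =
      signChar (symplecticPairing (pauliVec a) (pauliVec c)) • (PauliProd a * PauliProd c) := by
  simp only [pauliProd_eq_piKron, piKron_mul]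
  rw [funext fun k => pauli_mul_comm (a k) (c k), piKron_smul, ← signChar_sum]
  rfl

theorem pauliProd_mul_ne_zero (a c : Fin n → Fin 4) : PauliProd a * PauliProd c ≠ 0 := by
  intro h
  have : PauliProd a * PauliProd c * (PauliProd c * PauliProd a) = 1 := by
    rw [mul_assoc, ← mul_assoc (PauliProd c), pauliProd_mul_self, one_mul, pauliProd_mul_self]
  simp [h] at this

theorem pauliProd_commute_iff (a c : Fin n → Fin 4) :
    PauliProd a * PauliProd c = PauliProd c * PauliProd a ↔
      symplecticPairing (pauliVec c) (pauliVec a) = 0 := by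
  rw [pauliProd_mul_comm c a, ← signChar_eq_one_iff]
  conv_lhs => rhs; rw [← one_smul ℂ (PauliProd c * PauliProd a)]
  exact (smul_left_injective ℂ (pauliProd_mul_ne_zero c a)).eq_iff

end PauliProd

section Counting

variable {V : Type*} [AddGroup V] {φ ψ : V →+ ZMod 2}

theorem AddMonoidHom.exists_apply_eq_zero_and_apply_eq_one (hψ : ψ ≠ 0) (hψφ : ψ ≠ φ) :
    ∃ u, φ u = 0 ∧ ψ u = 1 := by
  by_contra! hker
  obtain ⟨w, hw⟩ : ∃ w, ψ w ≠ 0 := by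
    by_contra! h
    exact hψ (AddMonoidHom.ext h)
  obtain ⟨w', hw'⟩ : ∃ w', ψ w' ≠ φ w' := by
    by_contra! h
    exact hψφ (AddMonoidHom.ext h)
  have hsum := hker (w + w')
  have hkerw := hker w
  have hkerw' := hker w'
  rw [map_add, map_add] at hsum
  -- ψ vanishing on ker φ forces φ w = ψ w = φ w' = 1 and ψ w' = 0, so w + w' ∈ ker φ has ψ = 1
  revert hw hw' hsum hkerw hkerw'
  generalize φ w = x; generalize ψ w = y; generalize φ w' = x'; generalize ψ w' = y'
  decide +revert

theorem card_filter_filter_eq_half [Fintype V] (hψ : ψ ≠ 0) (hψφ : ψ ≠ φ) :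
    #((univ.filter (φ · = 0)).filter (ψ · = 0)) = #(univ.filter (φ · = 0)) / 2 := by
  obtain ⟨u, hφu, hψu⟩ := AddMonoidHom.exists_apply_eq_zero_and_apply_eq_one hψ hψφ
  set s := univ.filter (φ · = 0)
  have htranslate : #(s.filter (ψ · = 0)) = #(s.filter fun v => ¬ψ v = 0) := by
    refine card_nbij' (· + u) (· - u) ?_ ?_ (fun v _ => add_sub_cancel_right v u)
      (fun v _ => sub_add_cancel v u) <;> intro v <;> simp +contextual [s, hφu, hψu]
    exact fun _ hψv =>
      sub_eq_zero.2 ((ZMod.eq_zero_or_eq_one _).resolve_left hψv)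
  have := card_filter_add_card_filter_not (s := s) (ψ · = 0)
  omega

end Counting

theorem half_commute_in_commutant_general {n : ℕ} (α b : Fin n → Fin 4)
    (hb : b ≠ fun _ => 0) (hbα : b ≠ α) :
    ((Finset.univ.filter fun a : Fin n → Fin 4 =>
          PauliProd a * PauliProd α = PauliProd α * PauliProd a).filter
        fun a => PauliProd a * PauliProd b = PauliProd b * PauliProd a).card
      = (Finset.univ.filter fun a : Fin n → Fin 4 =>
          PauliProd a * PauliProd α = PauliProd α * PauliProd a).card / 2 := by
  have hinj : Function.Injective fun c : Fin n → Fin 4 => symplecticPairing (pauliVec c) :=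
    symplecticPairing_injective.comp pauliVec.injective
  have hψ : symplecticPairing (pauliVec b) ≠ 0 := by
    simpa [pauliVec_zero] using hinj.ne hb
  have hcount := card_filter_filter_eq_half hψ (hinj.ne hbα)
  convert hcount using 2 <;>
    refine card_equiv pauliVec fun a => ?_ <;> simp [pauliProd_commute_iff]

/-- Among the Pauli products commuting with a nonidentity P(α), exactly half
commute with another nonidentity P(b) with b ≠ α. -/
theorem half_commute_in_commutant {n : ℕ} (α b : Fin n → Fin 4)
    (hα : α ≠ fun _ => 0) (hb : b ≠ fun _ => 0) (hbα : b ≠ α) :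
    ((Finset.univ.filter fun a : Fin n → Fin 4 =>
          PauliProd a * PauliProd α = PauliProd α * PauliProd a).filter
        fun a => PauliProd a * PauliProd b = PauliProd b * PauliProd a).card
      = (Finset.univ.filter fun a : Fin n → Fin 4 =>
          PauliProd a * PauliProd α = PauliProd α * PauliProd a).card / 2 :=
  half_commute_in_commutant_general α b hb hbα
end
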